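/- There exists a constant δ_0 > 0 such that for every δ > δ_0/√T and every t ∈ [0,T]: lim_{m→∞} P( sup_{s∈[0,t]} ‖Ẇ^m(s)‖_U > δ m 2^{m/2} ) = 0, where ‖Ẇ^m(s)‖_U := ( Σ_{i=1}^m β̇_i^m(s)^2 )^{1/2}. -/

import Mathlib

open MeasureTheory ProbabilityTheory Filter

noncomputable section

variable {Ω : Type*} {mΩ : MeasurableSpace Ω}

/-- A standard real-valued Brownian motion (extended by `0` on `(-∞,0]`),
adapted to the filtration `F`, with increments after time `s` independent of `F s`. -/
structure IsBM (P : Measure Ω) (F : Filtration ℝ mΩ) (B : ℝ → Ω → ℝ) : Prop where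
  zero_of_nonpos : ∀ t ≤ (0 : ℝ), ∀ ω, B t ω = 0
  cont : ∀ ω, Continuous fun t => B t ω
  adapted : Adapted F fun t => B t
  gauss_incr : ∀ s t : ℝ, 0 ≤ s → s ≤ t →
    P.map (fun ω => B t ω - B s ω) = gaussianReal 0 (Real.toNNReal (t - s))
  indep_incr : ∀ s t : ℝ, 0 ≤ s → s ≤ t →
    Indep (MeasurableSpace.comap (fun ω => B t ω - B s ω) (borel ℝ)) (F s) P

/-- Mutual independence of a family of real-valued processes. -/
def IndepFamily (P : Measure Ω) (B : ℕ → ℝ → Ω → ℝ) : Prop :=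
  iIndepFun (m := fun _ : ℕ => (inferInstance : MeasurableSpace (ℝ → ℝ)))
    (fun i ω t => B i t ω) P

/-- `β̇ᵢᵐ(t) = ϖ⁻¹ (βᵢ(⌊t/ϖ⌋ϖ) − βᵢ((⌊t/ϖ⌋−1)ϖ))` with `ϖ = T/2^m`. -/
def bdot (T : ℝ) (m : ℕ) (B : ℝ → Ω → ℝ) (t : ℝ) (ω : Ω) : ℝ :=
  (B ((⌊t / (T / 2 ^ m)⌋ : ℝ) * (T / 2 ^ m)) ω -
      B (((⌊t / (T / 2 ^ m)⌋ : ℝ) - 1) * (T / 2 ^ m)) ω) / (T / 2 ^ m)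

variable {U : Type*} [NormedAddCommGroup U] [InnerProductSpace ℝ U]

/-- `Ẇᵐ(t) = Σ_{i<m} β̇ᵢᵐ(t) eᵢ ∈ U` (the basis is reindexed from `0`). -/
def Wdot (T : ℝ) (m : ℕ) (B : ℕ → ℝ → Ω → ℝ) (e : ℕ → U) (t : ℝ) (ω : Ω) : U :=
  ∑ i ∈ Finset.range m, bdot T m (B i) t ω • e i

/-!
On `[0, t]` the process `Ẇᵐ` only takes its values at the grid points `kϖ`, `0 ≤ k ≤ 2ᵐ`.
By orthonormality, `‖Ẇᵐ(s)‖ > δ m 2^{m/2}` forces `|β̇ᵢᵐ(s)| > δ √m 2^{m/2}` for some `i < m`,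
i.e. a Brownian increment of variance `ϖ` exceeds `δ √m 2^{m/2} ϖ`; the Gaussian Chernoff bound
gives this probability at most `2 exp (-δ² T m / 2)`. A union bound over the `m (2ᵐ + 1)` pairs
`(i, k)` leaves `m (2ᵐ + 1) · 2 exp (-δ² T m / 2)`, which tends to `0` as soon as
`δ² T / 2 > log 2`; `δ₀ = 2` suffices.
-/

open scoped NNReal Topology
open Finset Real

lemma ProbabilityTheory.hasSubgaussianMGF_id_gaussianReal (v : ℝ≥0) :
    HasSubgaussianMGF id v (gaussianReal 0 v) where
  integrable_exp_mul t := integrable_exp_mul_gaussianReal t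
  mgf_le t := by simp [mgf_id_gaussianReal]

lemma ProbabilityTheory.measureReal_lt_abs_le_of_map_eq_gaussianReal {P : Measure Ω}
    [IsFiniteMeasure P] {X : Ω → ℝ} {v : ℝ≥0} (hX : AEMeasurable X P)
    (hlaw : P.map X = gaussianReal 0 v) {ε : ℝ} (hε : 0 ≤ ε) :
    P.real {ω | ε < |X ω|} ≤ 2 * exp (-ε ^ 2 / (2 * v)) := by
  have hsub : HasSubgaussianMGF X v P :=
    (HasSubgaussianMGF.id_map_iff hX).1 (hlaw ▸ hasSubgaussianMGF_id_gaussianReal v)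
  have hsplit : {ω | ε < |X ω|} ⊆ {ω | ε ≤ X ω} ∪ {ω | ε ≤ (-X) ω} := by
    intro ω (hω : ε < |X ω|)
    rcases lt_abs.1 hω with h | h
    · exact Or.inl h.le
    · exact Or.inr h.le
  calc P.real {ω | ε < |X ω|} ≤ P.real {ω | ε ≤ X ω} + P.real {ω | ε ≤ (-X) ω} :=
        (measureReal_mono hsplit).trans (measureReal_union_le _ _)
    _ ≤ 2 * exp (-ε ^ 2 / (2 * v)) := by
        linarith [hsub.measure_ge_le hε, hsub.neg.measure_ge_le hε]

namespace IsBM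

variable {P : Measure Ω} {F : Filtration ℝ mΩ} {B : ℝ → Ω → ℝ}

lemma measurable (hB : IsBM P F B) (t : ℝ) : Measurable (B t) :=
  (hB.adapted t).mono (F.le t) le_rfl

lemma measureReal_lt_abs_sub_le [IsFiniteMeasure P] (hB : IsBM P F B) {s t : ℝ} (hs : 0 ≤ s)
    (hst : s ≤ t) {ε : ℝ} (hε : 0 ≤ ε) :
    P.real {ω | ε < |B t ω - B s ω|} ≤ 2 * exp (-ε ^ 2 / (2 * (t - s))) := by
  have h := measureReal_lt_abs_le_of_map_eq_gaussianReal
    ((hB.measurable t).sub (hB.measurable s)).aemeasurable (hB.gauss_incr s t hs hst) hε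
  rwa [Real.coe_toNNReal _ (sub_nonneg.2 hst)] at h

lemma measureReal_lt_abs_grid_sub_le [IsFiniteMeasure P] (hB : IsBM P F B) {h : ℝ} (hh : 0 < h)
    (k : ℤ) {ε : ℝ} (hε : 0 ≤ ε) :
    P.real {ω | ε < |B (k * h) ω - B ((k - 1) * h) ω|} ≤ 2 * exp (-ε ^ 2 / (2 * h)) := by
  rcases le_or_gt k 0 with hk | hk
  · have hk' : (k : ℝ) ≤ 0 := by exact_mod_cast hk
    have hempty : {ω | ε < |B (k * h) ω - B ((k - 1) * h) ω|} = ∅ := by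
      ext ω
      simp [hB.zero_of_nonpos _ (mul_nonpos_of_nonpos_of_nonneg hk' hh.le),
        hB.zero_of_nonpos ((k - 1) * h) (by nlinarith), hε]
    rw [hempty, measureReal_empty]
    positivity
  · have hk' : (1 : ℝ) ≤ k := by exact_mod_cast hk
    have hbound := hB.measureReal_lt_abs_sub_le (s := (k - 1) * h) (t := k * h) (by nlinarith)
      (by nlinarith) hε
    rwa [show (k : ℝ) * h - (k - 1) * h = h by ring] at hbound

end IsBM

lemma Real.exists_lt_of_lt_biSup {α : Type*} {S : Set α} {f : α → ℝ} {r : ℝ} (hr : 0 ≤ r)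
    (h : r < ⨆ s ∈ S, f s) : ∃ s ∈ S, r < f s := by
  by_contra! hle
  exact h.not_ge (Real.iSup_le (fun s => Real.iSup_le (hle s) hr) hr)

lemma Orthonormal.norm_sum_smul_le {ι : Type*} {e : ι → U} (he : Orthonormal ℝ e)
    (s : Finset ι) {c : ι → ℝ} {a : ℝ} (ha : 0 ≤ a) (hc : ∀ i ∈ s, |c i| ≤ a) :
    ‖∑ i ∈ s, c i • e i‖ ≤ √(#s) * a := by
  refine le_of_pow_le_pow_left₀ two_ne_zero (by positivity) ?_
  calc ‖∑ i ∈ s, c i • e i‖ ^ 2 = ∑ i ∈ s, c i ^ 2 := by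
        rw [← real_inner_self_eq_norm_sq, he.inner_sum]
        simp [sq]
    _ ≤ ∑ _i ∈ s, a ^ 2 :=
        sum_le_sum fun i hi => sq_le_sq.2 (by rw [abs_of_nonneg ha]; exact hc i hi)
    _ = (√(#s) * a) ^ 2 := by rw [sum_const, nsmul_eq_mul, mul_pow, sq_sqrt (Nat.cast_nonneg _)]

lemma floor_div_mem_Icc {T : ℝ} (hT : 0 < T) (m : ℕ) {s : ℝ} (hs : s ∈ Set.Icc 0 T) :
    ⌊s / (T / 2 ^ m)⌋ ∈ Icc (0 : ℤ) (2 ^ m) := by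
  have hϖ : 0 < T / 2 ^ m := by positivity
  have hle : s / (T / 2 ^ m) ≤ 2 ^ m := by
    rw [div_le_iff₀ hϖ, mul_div_cancel₀ _ (by positivity)]
    exact hs.2
  refine mem_Icc.2 ⟨Int.floor_nonneg.2 (div_nonneg hs.1 hϖ.le), Int.floor_le_iff.2 ?_⟩
  push_cast
  linarith

lemma exists_lt_abs_grid_sub_of_lt_iSup_norm_Wdot {T : ℝ} (hT : 0 < T) {m : ℕ}
    {B : ℕ → ℝ → Ω → ℝ} {e : ℕ → U} (he : Orthonormal ℝ e) {t δ : ℝ} (ht : t ≤ T)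
    (hδ : 0 ≤ δ) {ω : Ω} (h : δ * m * √(2 ^ m) < ⨆ s ∈ Set.Icc 0 t, ‖Wdot T m B e s ω‖) :
    ∃ i ∈ range m, ∃ k ∈ Icc (0 : ℤ) (2 ^ m), δ * √m * √(2 ^ m) * (T / 2 ^ m) <
      |B i (k * (T / 2 ^ m)) ω - B i ((k - 1) * (T / 2 ^ m)) ω| := by
  set ϖ : ℝ := T / 2 ^ m with hϖ_def
  have hϖ : 0 < ϖ := by positivity
  set a : ℝ := δ * √m * √(2 ^ m)
  obtain ⟨s, hs, hlt⟩ := Real.exists_lt_of_lt_biSup (by positivity) h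
  by_contra! hle
  have hbdot : ∀ i ∈ range m, |bdot T m (B i) s ω| ≤ a := fun i hi => by
    rw [bdot, ← hϖ_def, abs_div, abs_of_pos hϖ, div_le_iff₀ hϖ]
    exact hle i hi _ (floor_div_mem_Icc hT m ⟨hs.1, hs.2.trans ht⟩)
  have hm : √(m : ℝ) * √m = m := mul_self_sqrt (Nat.cast_nonneg m)
  have hnorm : ‖Wdot T m B e s ω‖ ≤ δ * m * √(2 ^ m) :=
    calc ‖Wdot T m B e s ω‖ ≤ √(#(range m)) * a := he.norm_sum_smul_le _ (by positivity) hbdot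
      _ = δ * m * √(2 ^ m) := by
        rw [card_range]
        linear_combination δ * √(2 ^ m) * hm
  exact hlt.not_ge hnorm

lemma measureReal_lt_iSup_norm_Wdot_le {T : ℝ} (hT : 0 < T) {P : Measure Ω}
    [IsFiniteMeasure P] {F : Filtration ℝ mΩ} {B : ℕ → ℝ → Ω → ℝ} (hBM : ∀ i, IsBM P F (B i))
    {e : ℕ → U} (he : Orthonormal ℝ e) {t δ : ℝ} (ht : t ≤ T) (hδ : 0 ≤ δ) (m : ℕ) :
    P.real {ω | δ * m * √(2 ^ m) < ⨆ s ∈ Set.Icc 0 t, ‖Wdot T m B e s ω‖} ≤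
      m * (2 ^ m + 1) * (2 * exp (-(δ ^ 2 * T / 2) * m)) := by
  set ϖ : ℝ := T / 2 ^ m with hϖ_def
  have hϖ : 0 < ϖ := by positivity
  set a : ℝ := δ * √m * √(2 ^ m)
  have hexponent : -(a * ϖ) ^ 2 / (2 * ϖ) = -(δ ^ 2 * T / 2) * m := by
    simp only [a, hϖ_def, mul_pow, sq_sqrt (by positivity : (0 : ℝ) ≤ m),
      sq_sqrt (by positivity : (0 : ℝ) ≤ 2 ^ m)]
    field_simp
  have hcard : (#(Icc (0 : ℤ) (2 ^ m)) : ℝ) = 2 ^ m + 1 := by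
    have h := Int.card_Icc_of_le (0 : ℤ) (2 ^ m) (by positivity)
    rw [sub_zero] at h
    exact_mod_cast h
  calc P.real {ω | δ * m * √(2 ^ m) < ⨆ s ∈ Set.Icc 0 t, ‖Wdot T m B e s ω‖}
      ≤ P.real (⋃ i ∈ range m, ⋃ k ∈ Icc (0 : ℤ) (2 ^ m),
          {ω | a * ϖ < |B i (k * ϖ) ω - B i ((k - 1) * ϖ) ω|}) := by
        refine measureReal_mono (fun ω hω => ?_) (measure_ne_top _ _)
        obtain ⟨i, hi, k, hk, hlt⟩ := exists_lt_abs_grid_sub_of_lt_iSup_norm_Wdot hT he ht hδ hω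
        simp only [Set.mem_iUnion]
        exact ⟨i, hi, k, hk, hlt⟩
    _ ≤ ∑ i ∈ range m, ∑ k ∈ Icc (0 : ℤ) (2 ^ m),
          P.real {ω | a * ϖ < |B i (k * ϖ) ω - B i ((k - 1) * ϖ) ω|} :=
        (measureReal_biUnion_finset_le _ _).trans
          (sum_le_sum fun i _ => measureReal_biUnion_finset_le _ _)
    _ ≤ ∑ _i ∈ range m, ∑ _k ∈ Icc (0 : ℤ) (2 ^ m), 2 * exp (-(a * ϖ) ^ 2 / (2 * ϖ)) :=
        sum_le_sum fun i _ => sum_le_sum fun k _ =>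
          (hBM i).measureReal_lt_abs_grid_sub_le hϖ k (by positivity)
    _ = m * (2 ^ m + 1) * (2 * exp (-(δ ^ 2 * T / 2) * m)) := by
        simp only [sum_const, card_range, nsmul_eq_mul, hcard, hexponent]
        ring

lemma tendsto_mul_two_pow_add_one_mul_exp_neg {c : ℝ} (hc : log 2 < c) :
    Tendsto (fun m : ℕ => m * (2 ^ m + 1) * (2 * exp (-c * m))) atTop (𝓝 0) := by
  set r : ℝ := 2 * exp (-c)
  have hr : r < 1 := by
    have h : exp (-c) < exp (-log 2) := exp_lt_exp.2 (by linarith)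
    rw [exp_neg (log 2), exp_log two_pos] at h
    linarith
  have hbound : ∀ m : ℕ, m * (2 ^ m + 1) * (2 * exp (-c * m)) ≤ 4 * (m * r ^ m) := fun m => by
    have hpow : r ^ m = 2 ^ m * exp (-c * m) := by rw [mul_pow, mul_comm (-c), exp_nat_mul]
    have hone : (1 : ℝ) ≤ 2 ^ m := one_le_pow₀ one_le_two
    rw [hpow]
    nlinarith [mul_nonneg (mul_nonneg (Nat.cast_nonneg' m) (exp_pos (-c * m)).le)
      (sub_nonneg.2 hone)]
  refine squeeze_zero (fun m => by positivity) hbound ?_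
  simpa using (tendsto_self_mul_const_pow_of_lt_one (by positivity) hr).const_mul 4

theorem statement6_general (T : ℝ) (hT : 0 < T) (P : Measure Ω) [IsProbabilityMeasure P]
    (F : Filtration ℝ mΩ) (B : ℕ → ℝ → Ω → ℝ)
    (hBM : ∀ i, IsBM P F (B i))
    (e : ℕ → U) (he : Orthonormal ℝ e) :
    ∃ δ₀ : ℝ, 0 < δ₀ ∧ ∀ δ : ℝ, δ₀ / Real.sqrt T < δ → ∀ t ∈ Set.Icc (0 : ℝ) T,
      Tendsto
        (fun m : ℕ =>
          P {ω | δ * m * Real.sqrt (2 ^ m) <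
              ⨆ s ∈ Set.Icc (0 : ℝ) t, ‖Wdot T m B e s ω‖})
        atTop (nhds 0) := by
  refine ⟨2, two_pos, fun δ hδ t ht => ?_⟩
  have hδT : 2 < δ * √T := (div_lt_iff₀ (sqrt_pos.2 hT)).1 hδ
  have hδ_nonneg : 0 ≤ δ := by nlinarith [sqrt_nonneg T]
  have hc : log 2 < δ ^ 2 * T / 2 := by
    have h : 4 < δ ^ 2 * T := by nlinarith [sq_sqrt hT.le]
    linarith [log_two_lt_d9]
  rw [← ENNReal.tendsto_toReal_iff (fun _ => measure_ne_top _ _) ENNReal.zero_ne_top,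
    ENNReal.toReal_zero]
  exact squeeze_zero (fun _ => measureReal_nonneg)
    (measureReal_lt_iSup_norm_Wdot_le hT hBM he ht.2 hδ_nonneg)
    (tendsto_mul_two_pow_add_one_mul_exp_neg hc)

/-- there is `δ₀ > 0` such that for every `δ > δ₀/√T` and every
`t ∈ [0,T]`, `P( sup_{s∈[0,t]} ‖Ẇᵐ(s)‖_U > δ m 2^{m/2} ) → 0` as `m → ∞`. -/
theorem statement6 (T : ℝ) (hT : 0 < T) (P : Measure Ω) [IsProbabilityMeasure P]
    (F : Filtration ℝ mΩ) (B : ℕ → ℝ → Ω → ℝ)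
    (hBM : ∀ i, IsBM P F (B i)) (hind : IndepFamily P B)
    (e : ℕ → U) (he : Orthonormal ℝ e) :
    ∃ δ₀ : ℝ, 0 < δ₀ ∧ ∀ δ : ℝ, δ₀ / Real.sqrt T < δ → ∀ t ∈ Set.Icc (0 : ℝ) T,
      Tendsto
        (fun m : ℕ =>
          P {ω | δ * m * Real.sqrt (2 ^ m) <
              ⨆ s ∈ Set.Icc (0 : ℝ) t, ‖Wdot T m B e s ω‖})
        atTop (nhds 0) :=
  statement6_general T hT P F B hBM e he

end
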